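/- Let K ≥ 2, α ∈ (0,1), γ > 0, d ≥ 2, L ∈ ℝ^K, and let β, β' ∈ ℝ^K have all coordinates positive with β'_i = β_i for all i ≥ 2 and 0 ≤ β'_1 − β_1 ≤ (1 − 1/d)·γ·x_1^{−α}. Suppose x minimizes G_{L,β,γ} and y minimizes G_{L,β',γ}. Then y_1 ≤ d·x_1. -/

import Mathlib

open Finset

/-- The coordinate-wise hybrid objective
`G_{L,β,γ}(p) = ⟨L,p⟩ + Σᵢ βᵢ(−pᵢ^α/α + (1−pᵢ)ln(1−pᵢ) + pᵢ) − γ Σᵢ ln pᵢ`. -/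
noncomputable def hybridG {K : ℕ} (α γ : ℝ) (β L p : Fin K → ℝ) : ℝ :=
  (∑ i, L i * p i) +
    (∑ i, β i * (-(p i ^ α) / α + (1 - p i) * Real.log (1 - p i) + p i)) -
    γ * ∑ i, Real.log (p i)

/-- The domain `{p ∈ Δ_K : 0 < pᵢ < 1 for all i}`. -/
def openSimplex {K : ℕ} (p : Fin K → ℝ) : Prop :=
  (∀ i, 0 < p i ∧ p i < 1) ∧ ∑ i, p i = 1

/-- `x` minimizes `G_{L,β,γ}` over the domain. -/
def MinimizesG {K : ℕ} (α γ : ℝ) (β L x : Fin K → ℝ) : Prop :=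
  openSimplex x ∧ ∀ p : Fin K → ℝ, openSimplex p → hybridG α γ β L x ≤ hybridG α γ β L p

noncomputable def phiF (α γ Lk βk t : ℝ) : ℝ :=
  Lk * t + βk * (-(t ^ α) / α + (1 - t) * Real.log (1 - t) + t) - γ * Real.log t

noncomputable def dphiF (α γ Lk βk t : ℝ) : ℝ :=
  Lk + βk * (-(t ^ (α - 1)) - Real.log (1 - t)) - γ / t

lemma hybridG_eq_sum {K : ℕ} (α γ : ℝ) (β L p : Fin K → ℝ) :
    hybridG α γ β L p = ∑ i, phiF α γ (L i) (β i) (p i) := by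
  simp [hybridG, phiF, Finset.sum_add_distrib, Finset.sum_sub_distrib, Finset.mul_sum]

lemma hasDerivAt_phiF {α γ : ℝ} (hα0 : 0 < α) (Lk βk : ℝ) {t : ℝ}
    (h0 : 0 < t) (h1 : t < 1) :
    HasDerivAt (phiF α γ Lk βk) (dphiF α γ Lk βk t) t := by
  have h1t : (0:ℝ) < 1 - t := by linarith
  have d1 : HasDerivAt (fun s : ℝ => Lk * s) Lk t := by
    simpa using (hasDerivAt_id t).const_mul Lk
  have drp : HasDerivAt (fun s : ℝ => s ^ α) (α * t ^ (α - 1)) t :=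
    Real.hasDerivAt_rpow_const (Or.inl h0.ne')
  have d2 : HasDerivAt (fun s : ℝ => -(s ^ α) / α) (-(t ^ (α - 1))) t := by
    have := (drp.neg).div_const α
    have hne : α ≠ 0 := hα0.ne'
    refine this.congr_deriv ?_
    field_simp
  have dsub : HasDerivAt (fun s : ℝ => 1 - s) (-1) t := (hasDerivAt_id t).const_sub 1
  have dlog1 : HasDerivAt (fun s : ℝ => Real.log (1 - s)) ((1 - t)⁻¹ * (-1)) t :=
    (Real.hasDerivAt_log h1t.ne').comp t dsub
  have d3 : HasDerivAt (fun s : ℝ => (1 - s) * Real.log (1 - s))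
      (-Real.log (1 - t) - 1) t := by
    have := dsub.mul dlog1
    refine this.congr_deriv ?_
    field_simp
    ring
  have d4 : HasDerivAt Real.log t⁻¹ t := Real.hasDerivAt_log h0.ne'
  have dinner : HasDerivAt (fun s : ℝ => -(s ^ α) / α + (1 - s) * Real.log (1 - s) + s)
      (-(t ^ (α - 1)) + (-Real.log (1 - t) - 1) + 1) t :=
    (d2.add d3).add (hasDerivAt_id t)
  have := (d1.add (dinner.const_mul βk)).sub (d4.const_mul γ)
  refine this.congr_deriv ?_
  unfold dphiF
  rw [div_eq_mul_inv]
  ring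

lemma sum_update_eval {K : ℕ} (g : Fin K → ℝ → ℝ) (u : Fin K → ℝ) (m : Fin K) (c : ℝ) :
    ∑ k, g k (Function.update u m c k) = (∑ k, g k (u k)) + (g m c - g m (u m)) := by
  rw [← Finset.sum_erase_add _ _ (Finset.mem_univ m),
      ← Finset.sum_erase_add Finset.univ (fun k => g k (u k)) (Finset.mem_univ m)]
  have hc : ∀ k ∈ Finset.univ.erase m, g k (Function.update u m c k) = g k (u k) := by
    intro k hk
    rw [Function.update_of_ne (Finset.ne_of_mem_erase hk)]
  rw [Finset.sum_congr rfl hc, Function.update_self]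
  ring

lemma foc {K : ℕ} {α γ : ℝ} {β L x : Fin K → ℝ} (hα0 : 0 < α)
    (hx : MinimizesG α γ β L x) {i j : Fin K} (hij : i ≠ j) :
    dphiF α γ (L i) (β i) (x i) = dphiF α γ (L j) (β j) (x j) := by
  obtain ⟨⟨hdom, hsum⟩, hmin⟩ := hx
  set h : ℝ → ℝ := fun t =>
    phiF α γ (L i) (β i) (x i + t) + phiF α γ (L j) (β j) (x j - t) with hh
  have hxi := hdom i
  have hxj := hdom j
  -- local min of h at 0
  have hmin0 : IsLocalMin h 0 := by
    have hε : (0:ℝ) < min (min (x i) (1 - x i)) (min (x j) (1 - x j)) := by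
      simp only [lt_min_iff]
      refine ⟨⟨hxi.1, by linarith [hxi.2]⟩, ⟨hxj.1, by linarith [hxj.2]⟩⟩
    rw [IsLocalMin, IsMinFilter, Metric.eventually_nhds_iff]
    refine ⟨_, hε, ?_⟩
    intro t ht
    rw [Real.dist_eq, sub_zero] at ht
    have ht1 : |t| < x i := lt_of_lt_of_le ht (le_trans (min_le_left _ _) (min_le_left _ _))
    have ht2 : |t| < 1 - x i := lt_of_lt_of_le ht (le_trans (min_le_left _ _) (min_le_right _ _))
    have ht3 : |t| < x j := lt_of_lt_of_le ht (le_trans (min_le_right _ _) (min_le_left _ _))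
    have ht4 : |t| < 1 - x j := lt_of_lt_of_le ht (le_trans (min_le_right _ _) (min_le_right _ _))
    have habs1 := abs_lt.mp ht1
    have habs2 := abs_lt.mp ht2
    have habs3 := abs_lt.mp ht3
    have habs4 := abs_lt.mp ht4
    set q : Fin K → ℝ := Function.update (Function.update x i (x i + t)) j (x j - t) with hq
    have hqj : q j = x j - t := Function.update_self _ _ _
    have hqi : q i = x i + t := by
      rw [hq, Function.update_of_ne hij, Function.update_self]
    have hqk : ∀ k, k ≠ i → k ≠ j → q k = x k := by
      intro k hki hkj
      rw [hq, Function.update_of_ne hkj, Function.update_of_ne hki]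
    have hqdom : openSimplex q := by
      constructor
      · intro k
        by_cases hkj : k = j
        · subst hkj; rw [hqj]; constructor <;> linarith [habs3.1, habs3.2, habs4.1, habs4.2]
        by_cases hki : k = i
        · subst hki; rw [hqi]; constructor <;> linarith [habs1.1, habs1.2, habs2.1, habs2.2]
        · rw [hqk k hki hkj]; exact hdom k
      · rw [hq, sum_update_eval (fun _ s => s), sum_update_eval (fun _ s => s),
          Function.update_of_ne (Ne.symm hij)]
        simp [hsum]
    have hGq := hmin q hqdom
    rw [hybridG_eq_sum, hybridG_eq_sum] at hGq
    rw [hq, sum_update_eval (fun k s => phiF α γ (L k) (β k) s)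
        (Function.update x i (x i + t)) j (x j - t),
      sum_update_eval (fun k s => phiF α γ (L k) (β k) s) x i (x i + t),
      Function.update_of_ne (Ne.symm hij)] at hGq
    simp only [hh, add_zero, sub_zero]
    linarith [hGq]
  -- derivative of h at 0
  have Hi : HasDerivAt (fun t : ℝ => phiF α γ (L i) (β i) (x i + t))
      (dphiF α γ (L i) (β i) (x i + 0) * 1) 0 :=
    (hasDerivAt_phiF hα0 (L i) (β i) (by simpa using hxi.1) (by simpa using hxi.2)).comp 0
      ((hasDerivAt_id 0).const_add (x i))
  have Hj : HasDerivAt (fun t : ℝ => phiF α γ (L j) (β j) (x j - t))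
      (dphiF α γ (L j) (β j) (x j - 0) * (-1)) 0 :=
    (hasDerivAt_phiF hα0 (L j) (β j) (by simpa using hxj.1) (by simpa using hxj.2)).comp 0
      ((hasDerivAt_id 0).const_sub (x j))
  have Hd : HasDerivAt h
      (dphiF α γ (L i) (β i) (x i + 0) * 1 + dphiF α γ (L j) (β j) (x j - 0) * (-1)) 0 :=
    Hi.add Hj
  have h0 := hmin0.deriv_eq_zero
  rw [Hd.deriv] at h0
  simp only [add_zero, sub_zero, mul_one, mul_neg_one] at h0
  linarith

/-- **Lemma 10 (coordinate-wise SPM: stability in the learning rate of one arm).**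
If `β'ᵢ = βᵢ` for `i ≥ 2` and `0 ≤ β'₁ − β₁ ≤ (1 − 1/d)·γ·x₁^{−α}` with `d ≥ 2`,
and `x`, `y` minimize `G_{L,β,γ}`, `G_{L,β',γ}` respectively, then `y₁ ≤ d·x₁`. -/
theorem stmt14 {K : ℕ} (hK : 2 ≤ K) (α γ d : ℝ)
    (hα : α ∈ Set.Ioo (0:ℝ) 1) (hγ : 0 < γ) (hd : 2 ≤ d)
    (L x y β β' : Fin K → ℝ)
    (hβ : ∀ i, 0 < β i) (hβ' : ∀ i, 0 < β' i)
    (heq : ∀ i : Fin K, (i : ℕ) ≠ 0 → β' i = β i)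
    (hgap₀ : 0 ≤ β' ⟨0, by omega⟩ - β ⟨0, by omega⟩)
    (hgap₁ : β' ⟨0, by omega⟩ - β ⟨0, by omega⟩ ≤
      (1 - 1 / d) * γ * (x ⟨0, by omega⟩) ^ (-α))
    (hx : MinimizesG α γ β L x) (hy : MinimizesG α γ β' L y) :
    y ⟨0, by omega⟩ ≤ d * x ⟨0, by omega⟩ := by

  have hα0 := hα.1
  have hα1 := hα.2
  by_contra hcon
  push_neg at hcon
  have hK0 : 0 < K := by omega
  set i0 : Fin K := ⟨0, hK0⟩ with hi0
  have hcon' : d * x i0 < y i0 := hcon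
  have hg0 : (0:ℝ) ≤ β' i0 - β i0 := hgap₀
  have hg1 : β' i0 - β i0 ≤ (1 - 1/d) * γ * (x i0) ^ (-α) := hgap₁
  have hxdom := hx.1.1
  have hydom := hy.1.1
  have hA0 : 0 < x i0 := (hxdom i0).1
  have hA1 : x i0 < 1 := (hxdom i0).2
  have hB0 : 0 < y i0 := (hydom i0).1
  have hB1 : y i0 < 1 := (hydom i0).2
  have hd0 : (0:ℝ) < d := by linarith
  have hBA : x i0 < y i0 := by
    nlinarith [mul_nonneg (by linarith : (0:ℝ) ≤ d - 2) hA0.le]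
  have hsx : ∑ k ∈ Finset.univ.erase i0, x k + x i0 = 1 := by
    rw [Finset.sum_erase_add _ _ (Finset.mem_univ i0)]; exact hx.1.2
  have hsy : ∑ k ∈ Finset.univ.erase i0, y k + y i0 = 1 := by
    rw [Finset.sum_erase_add _ _ (Finset.mem_univ i0)]; exact hy.1.2
  have hlt : ∑ k ∈ Finset.univ.erase i0, y k < ∑ k ∈ Finset.univ.erase i0, x k := by
    linarith
  obtain ⟨j, hjmem, hjlt⟩ := Finset.exists_lt_of_sum_lt hlt
  have hji0 : j ≠ i0 := Finset.ne_of_mem_erase hjmem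
  have hβ'j : β' j = β j := heq j (fun hv => hji0 (Fin.ext hv))
  have hij : i0 ≠ j := hji0.symm
  have Ex := foc hα0 hx hij
  have Ey := foc hα0 hy hij
  rw [hβ'j] at Ey
  simp only [dphiF] at Ex Ey
  have ha0 : 0 < x j := (hxdom j).1
  have ha1 : x j < 1 := (hxdom j).2
  have hb0 : 0 < y j := (hydom j).1
  have hb1 : y j < 1 := (hydom j).2
  set A := x i0
  set B := y i0
  set a := x j
  set b := y j
  have hz : α - 1 < 0 := by linarith
  have r1 : B ^ (α-1) ≤ A ^ (α-1) :=
    (Real.rpow_le_rpow_iff_of_neg hB0 hA0 hz).mpr hBA.le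
  have r2 : a ^ (α-1) < b ^ (α-1) := Real.rpow_lt_rpow_of_neg hb0 hjlt hz
  have r3 : Real.log (1-a) < Real.log (1-b) := Real.log_lt_log (by linarith) (by linarith)
  have r4 : Real.log (1-B) ≤ 0 := Real.log_nonpos (by linarith) (by linarith)
  have r8 : Real.log (1-B) ≤ Real.log (1-A) := Real.log_le_log (by linarith) (by linarith)
  have r5 : γ / a < γ / b := div_lt_div_of_pos_left hγ hb0 hjlt
  have r6 : γ / B < γ / (d * A) := div_lt_div_of_pos_left hγ (by positivity) hcon'
  have r6' : γ / (d * A) = (1/d) * (γ / A) := by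
    field_simp
  have hpow : A ^ (-α) * A ^ (α-1) = 1 / A := by
    rw [← Real.rpow_add hA0, show -α + (α-1) = -1 by ring, Real.rpow_neg_one, one_div]
  have hAexp : 0 ≤ A ^ (α-1) := Real.rpow_nonneg hA0.le _
  have p1 : 0 ≤ β i0 * ((-(B ^ (α-1)) - Real.log (1-B)) - (-(A ^ (α-1)) - Real.log (1-A))) :=
    mul_nonneg (hβ i0).le (by linarith)
  have p2 : (β' i0 - β i0) * (-(B ^ (α-1))) ≤
      (β' i0 - β i0) * (-(B ^ (α-1)) - Real.log (1-B)) :=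
    mul_le_mul_of_nonneg_left (by linarith) hg0
  have p3 : (β' i0 - β i0) * (-(A ^ (α-1))) ≤ (β' i0 - β i0) * (-(B ^ (α-1))) :=
    mul_le_mul_of_nonneg_left (by linarith) hg0
  have p4 : ((1 - 1/d) * γ * A ^ (-α)) * (-(A ^ (α-1))) ≤
      (β' i0 - β i0) * (-(A ^ (α-1))) :=
    mul_le_mul_of_nonpos_right hg1 (by linarith)
  have p5 : ((1 - 1/d) * γ * A ^ (-α)) * (-(A ^ (α-1))) = -((1 - 1/d) * (γ / A)) := by
    calc ((1 - 1/d) * γ * A ^ (-α)) * (-(A ^ (α-1)))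
        = -((1 - 1/d) * γ * (A ^ (-α) * A ^ (α-1))) := by ring
      _ = -((1 - 1/d) * γ * (1/A)) := by rw [hpow]
      _ = -((1 - 1/d) * (γ / A)) := by ring
  have q1 : β j * (-(b ^ (α-1)) - Real.log (1-b)) < β j * (-(a ^ (α-1)) - Real.log (1-a)) :=
    mul_lt_mul_of_pos_left (by linarith) (hβ j)
  have e1 : β i0 * ((-(B ^ (α-1)) - Real.log (1-B)) - (-(A ^ (α-1)) - Real.log (1-A)))
      = β i0 * (-(B ^ (α-1)) - Real.log (1-B)) - β i0 * (-(A ^ (α-1)) - Real.log (1-A)) := by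
    ring
  have e2 : (β' i0 - β i0) * (-(B ^ (α-1)) - Real.log (1-B))
      = β' i0 * (-(B ^ (α-1)) - Real.log (1-B)) - β i0 * (-(B ^ (α-1)) - Real.log (1-B)) := by
    ring
  have e3 : (1 - 1/d) * (γ / A) + (1/d) * (γ / A) = γ / A := by ring
  linarith [Ex, Ey, p1, p2, p3, p4, p5, q1, r5, r6, r6', e1, e2, e3]
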